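/- arXiv:1307.2824 — 6 statements merged into one kernel-verified Lean document; each statement's English description precedes it below -/
import Mathlib

section
/- Let N(p) - 1 ~ Bin(n-1, p) with n ≥ 2 and 0 < p < 1. Then E[log(N(p)/n)] > log p. -/
/-!
Write `log ((k + 1) / n) = log p + log x_k` with `x_k = (k + 1) / (n p)`. Since `log x ≥ 1 - 1 / x`,
the expected value of `log x_N` is at least `1 - n p E[1 / N]`, and the absorption identity
`n C(n - 1, k) = (k + 1) C(n, k + 1)` turns `n p E[1 / N]` into `1 - (1 - p) ^ n`.
Hence `E[log (N / n)] ≥ log p + (1 - p) ^ n > log p`.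
-/

open Finset

section BinomialSums

variable {R : Type*} [CommRing R] (p q : R) (m : ℕ)

theorem sum_range_choose_mul_pow_mul_pow :
    ∑ k ∈ range (m + 1), (m.choose k : R) * p ^ k * q ^ (m - k) = (p + q) ^ m := by
  rw [add_pow]
  exact sum_congr rfl fun k _ => by ring

theorem sum_range_succ_choose_succ_mul_pow_mul_pow :
    ∑ k ∈ range (m + 1), ((m + 1).choose (k + 1) : R) * p ^ (k + 1) * q ^ (m - k) =
      (p + q) ^ (m + 1) - q ^ (m + 1) := by
  rw [← sum_range_choose_mul_pow_mul_pow, sum_range_succ' _ (m + 1)]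
  simp

end BinomialSums

/-- For `q = 1 - p` this is `E[1 / (K + 1)] = (1 - q ^ (m + 1)) / ((m + 1) p)` for `K ~ Bin(m, p)`. -/
theorem mul_sum_range_choose_mul_pow_mul_pow_div_succ {K : Type*} [Field K] [CharZero K]
    (p q : K) (m : ℕ) :
    (m + 1) * p * ∑ k ∈ range (m + 1), (m.choose k : K) * p ^ k * q ^ (m - k) / (k + 1) =
      (p + q) ^ (m + 1) - q ^ (m + 1) := by
  rw [← sum_range_succ_choose_succ_mul_pow_mul_pow, mul_sum]
  refine sum_congr rfl fun k _ => ?_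
  have hchoose : ((m + 1 : ℕ) : K) * m.choose k = (m + 1).choose (k + 1) * (k + 1) := by
    exact_mod_cast Nat.add_one_mul_choose_eq m k
  push_cast at hchoose
  field_simp
  linear_combination p ^ (k + 1) * q ^ (m - k) * hchoose

theorem sum_sub_sum_div_le_sum_mul_log {ι : Type*} (s : Finset ι) (w x : ι → ℝ)
    (hw : ∀ i ∈ s, 0 ≤ w i) (hx : ∀ i ∈ s, 0 < x i) :
    ∑ i ∈ s, w i - ∑ i ∈ s, w i / x i ≤ ∑ i ∈ s, w i * Real.log (x i) := by
  rw [← sum_sub_distrib]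
  refine sum_le_sum fun i hi => ?_
  calc w i - w i / x i = w i * (1 - (x i)⁻¹) := by ring
    _ ≤ w i * Real.log (x i) := mul_le_mul_of_nonneg_left
        (Real.one_sub_inv_le_log_of_pos (hx i hi)) (hw i hi)

theorem expected_log_survivor_fraction_general (n : ℕ) (p : ℝ) (hp0 : 0 < p) (hp1 : p < 1) :
    (∑ k ∈ Finset.range n,
        ((n - 1).choose k : ℝ) * p ^ k * (1 - p) ^ (n - 1 - k) * Real.log ((k + 1 : ℝ) / n))
      > Real.log p := by
  rcases n with _ | m
  · simpa using Real.log_neg hp0 hp1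
  set w : ℕ → ℝ := fun k => (m.choose k : ℝ) * p ^ k * (1 - p) ^ (m - k)
  set x : ℕ → ℝ := fun k => (k + 1) / ((m + 1) * p)
  have hq : 0 < 1 - p := by linarith
  have hw_nonneg : ∀ k ∈ range (m + 1), 0 ≤ w k := fun k _ => by positivity
  have hx_pos : ∀ k, 0 < x k := fun k => by positivity
  have hw_sum : ∑ k ∈ range (m + 1), w k = 1 := by
    simp [w, sum_range_choose_mul_pow_mul_pow]
  have hw_div_x : ∑ k ∈ range (m + 1), w k / x k = 1 - (1 - p) ^ (m + 1) := by
    have := mul_sum_range_choose_mul_pow_mul_pow_div_succ p (1 - p) m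
    rw [add_sub_cancel, one_pow, mul_sum] at this
    rw [← this]
    exact sum_congr rfl fun k _ => by simp only [w, x]; field_simp
  have hlog_split : ∀ k : ℕ, Real.log ((k + 1) / (m + 1)) = Real.log (x k) + Real.log p := by
    intro k
    rw [← Real.log_mul (hx_pos k).ne' hp0.ne']
    simp only [x]
    field_simp
  simp only [Nat.add_sub_cancel, Nat.cast_add, Nat.cast_one]
  calc ∑ k ∈ range (m + 1), w k * Real.log ((k + 1) / (m + 1))
      = ∑ k ∈ range (m + 1), w k * Real.log (x k) + Real.log p := by
        simp only [hlog_split, mul_add, sum_add_distrib, ← sum_mul, hw_sum, one_mul]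
    _ ≥ ∑ k ∈ range (m + 1), w k - ∑ k ∈ range (m + 1), w k / x k + Real.log p := by
        gcongr; exact sum_sub_sum_div_le_sum_mul_log _ w x hw_nonneg fun k _ => hx_pos k
    _ = (1 - p) ^ (m + 1) + Real.log p := by rw [hw_sum, hw_div_x]; ring
    _ > Real.log p := by linarith [pow_pos hq (m + 1)]

theorem expected_log_survivor_fraction (n : ℕ) (hn : 2 ≤ n) (p : ℝ) (hp0 : 0 < p) (hp1 : p < 1) :
    (∑ k ∈ Finset.range n,
        ((n - 1).choose k : ℝ) * p ^ k * (1 - p) ^ (n - 1 - k) * Real.log ((k + 1 : ℝ) / n))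
      > Real.log p :=
  expected_log_survivor_fraction_general n p hp0 hp1
end

section
/- Define θ_{n,γ}(p) = E[(n/N(p))^{1-γ}] where N(p) - 1 ~ Bin(n-1,p), and β_{n,γ}(p) = p·θ_{n,γ}(p). For any n ≥ 2, 0 < p < 1, and γ with 0 < γ < 1, we have β_{n,γ}(p) < p^γ. -/
/-! By Jensen's inequality for the concave map `x ↦ x ^ (1 - γ)`,
`θ_{n,γ}(p) ≤ (E[n / N(p)]) ^ (1 - γ)`, and `E[n / N(p)] = (1 - (1 - p) ^ n) / p` because
`(n / (k + 1)) * C(n - 1, k) = C(n, k + 1)`. Hence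
`β_{n,γ}(p) ≤ p ^ γ * (1 - (1 - p) ^ n) ^ (1 - γ) < p ^ γ`. -/

open Finset

/-- θ_{n,γ}(p) = E[(n/N(p))^{1-γ}] where N(p) - 1 ~ Bin(n-1, p). -/
noncomputable def theta (n : ℕ) (γ p : ℝ) : ℝ :=
  ∑ k ∈ Finset.range n,
    ((n - 1).choose k : ℝ) * p ^ k * (1 - p) ^ (n - 1 - k) * ((n : ℝ) / (k + 1)) ^ (1 - γ)

/-- β_{n,γ}(p) = p · θ_{n,γ}(p). -/
noncomputable def beta (n : ℕ) (γ p : ℝ) : ℝ := p * theta n γ p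

theorem mul_sum_choose_mul_pow_mul_pow_mul_div {K : Type*} [Field K] [CharZero K]
    (m : ℕ) (p q : K) :
    p * ∑ k ∈ range (m + 1), (m.choose k : K) * p ^ k * q ^ (m - k) * ((m + 1) / (k + 1))
      = (p + q) ^ (m + 1) - q ^ (m + 1) := by
  rw [add_pow, sum_range_succ' _ (m + 1), mul_sum]
  simp only [pow_zero, Nat.sub_zero, Nat.choose_zero_right, Nat.cast_one, mul_one, one_mul,
    add_sub_cancel_right]
  refine sum_congr rfl fun k _ => ?_
  have hchoose : ((m : K) + 1) * m.choose k = (m + 1).choose (k + 1) * (k + 1) := by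
    exact_mod_cast Nat.add_one_mul_choose_eq m k
  have hk : m + 1 - (k + 1) = m - k := by omega
  rw [hk]
  field_simp
  linear_combination p ^ (k + 1) * q ^ (m - k) * hchoose

theorem theta_succ_le_rpow (m : ℕ) {p γ : ℝ} (hp0 : 0 ≤ p) (hp1 : p ≤ 1) (hγ0 : 0 ≤ γ)
    (hγ1 : γ ≤ 1) :
    theta (m + 1) γ p ≤
      (∑ k ∈ range (m + 1), (m.choose k : ℝ) * p ^ k * (1 - p) ^ (m - k) * ((m + 1) / (k + 1)))
        ^ (1 - γ) := by
  have hq : 0 ≤ 1 - p := sub_nonneg.2 hp1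
  have hweights : ∑ k ∈ range (m + 1), (m.choose k : ℝ) * p ^ k * (1 - p) ^ (m - k) = 1 := by
    have h := add_pow p (1 - p) m
    rw [add_sub_cancel, one_pow] at h
    exact (sum_congr rfl fun k _ => by ring).trans h.symm
  have hjensen := (Real.concaveOn_rpow (sub_nonneg.2 hγ1) (by linarith)).le_map_sum
    (fun k _ => by positivity) hweights
    (fun k _ => Set.mem_Ici.2 (by positivity : (0 : ℝ) ≤ (m + 1) / (k + 1)))
  simpa [theta] using hjensen

theorem beta_succ_le (m : ℕ) {p γ : ℝ} (hp0 : 0 < p) (hp1 : p ≤ 1) (hγ0 : 0 ≤ γ)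
    (hγ1 : γ ≤ 1) :
    beta (m + 1) γ p ≤ p ^ γ * (1 - (1 - p) ^ (m + 1)) ^ (1 - γ) := by
  set S := ∑ k ∈ range (m + 1), (m.choose k : ℝ) * p ^ k * (1 - p) ^ (m - k) * ((m + 1) / (k + 1))
  have hq : 0 ≤ 1 - p := sub_nonneg.2 hp1
  have hS : 0 ≤ S := sum_nonneg fun k _ => by positivity
  have hpS : p * S = 1 - (1 - p) ^ (m + 1) := by
    rw [mul_sum_choose_mul_pow_mul_pow_mul_div, add_sub_cancel, one_pow]
  calc beta (m + 1) γ p ≤ p * S ^ (1 - γ) :=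
        mul_le_mul_of_nonneg_left (theta_succ_le_rpow m hp0.le hp1 hγ0 hγ1) hp0.le
    _ = p ^ γ * (p * S) ^ (1 - γ) := by
        rw [Real.mul_rpow hp0.le hS, ← mul_assoc, ← Real.rpow_add hp0, add_sub_cancel,
          Real.rpow_one]
    _ = p ^ γ * (1 - (1 - p) ^ (m + 1)) ^ (1 - γ) := by rw [hpS]

theorem beta_lt_rpow (n : ℕ) (hn : 2 ≤ n) (p γ : ℝ) (hp0 : 0 < p) (hp1 : p < 1)
    (hγ0 : 0 < γ) (hγ1 : γ < 1) : beta n γ p < p ^ γ := by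
  obtain ⟨m, rfl⟩ : ∃ m, n = m + 1 := ⟨n - 1, by omega⟩
  have hpos : 0 < (1 - p) ^ (m + 1) := pow_pos (by linarith) _
  have hle : (1 - p) ^ (m + 1) ≤ 1 := pow_le_one₀ (by linarith) (by linarith)
  calc beta (m + 1) γ p ≤ p ^ γ * (1 - (1 - p) ^ (m + 1)) ^ (1 - γ) :=
        beta_succ_le m hp0 hp1.le hγ0.le hγ1.le
    _ < p ^ γ * 1 := by
        gcongr
        exact Real.rpow_lt_one (by linarith) (by linarith) (by linarith)
    _ = p ^ γ := mul_one _
end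

section
/- Define θ_{n,γ}(p) = E[(N(p)/n)^{γ-1}] where N(p) - 1 ~ Bin(n-1,p), and β_{n,γ}(p) = p·θ_{n,γ}(p). For any n ≥ 2, 0 < p < 1, and γ > 1, we have β_{n,γ}(p) > p^γ. -/
open Finset

/-!
Shifting the summation index turns `beta n γ p` into the Bernstein polynomial of `x ↦ x ^ γ`,
i.e. the expectation `E[(X / n) ^ γ]` for `X ~ Bin(n, p)`, because `p * C(n-1, k) * (n / (k+1))`
equals `C(n, k+1) * p`. As `E[X / n] = p`, strict Jensen's inequality for the strictly convex
`x ↦ x ^ γ` gives `β > p ^ γ`; it is strict since for `0 < p < 1` every value `0, …, n` of `X`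
has positive probability.
-/

open Polynomial

section Bernstein

variable {n ν : ℕ} {p : ℝ}

lemma bernsteinPolynomial_eval_pos (hν : ν ≤ n) (hp0 : 0 < p) (hp1 : p < 1) :
    0 < (bernsteinPolynomial ℝ n ν).eval p := by
  have hchoose : (0 : ℝ) < n.choose ν := by exact_mod_cast Nat.choose_pos hν
  have hq : 0 < 1 - p := sub_pos.mpr hp1
  simp only [bernsteinPolynomial, eval_mul, eval_pow, eval_sub, eval_one, eval_X, eval_natCast]
  positivity

variable (n p)

lemma sum_bernsteinPolynomial_eval :
    ∑ ν ∈ range (n + 1), (bernsteinPolynomial ℝ n ν).eval p = 1 := by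
  simpa only [eval_finsetSum, eval_one] using congrArg (eval p) (bernsteinPolynomial.sum ℝ n)

lemma sum_bernsteinPolynomial_eval_mul_div (hn : n ≠ 0) :
    ∑ ν ∈ range (n + 1), (bernsteinPolynomial ℝ n ν).eval p * ((ν : ℝ) / n) = p := by
  have hmean := congrArg (eval p) (bernsteinPolynomial.sum_smul ℝ n)
  simp only [eval_finsetSum, nsmul_eq_mul, eval_mul, eval_natCast, eval_X] at hmean
  have hn' : (n : ℝ) ≠ 0 := Nat.cast_ne_zero.mpr hn
  calc ∑ ν ∈ range (n + 1), (bernsteinPolynomial ℝ n ν).eval p * ((ν : ℝ) / n)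
      = (∑ ν ∈ range (n + 1), (ν : ℝ) * (bernsteinPolynomial ℝ n ν).eval p) / n := by
        rw [sum_div]
        exact sum_congr rfl fun ν _ => by ring
    _ = p := by rw [hmean]; field_simp

end Bernstein

lemma Nat.choose_succ_succ_eq_div_mul (m k : ℕ) :
    ((m + 1).choose (k + 1) : ℝ) = (m + 1) / (k + 1) * m.choose k := by
  rw [div_mul_eq_mul_div, eq_div_iff (by positivity)]
  exact_mod_cast (Nat.add_one_mul_choose_eq m k).symm

lemma rpow_one_sub_eq_mul_inv_rpow {x : ℝ} (hx : 0 < x) (γ : ℝ) :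
    x ^ (1 - γ) = x * x⁻¹ ^ γ := by
  rw [Real.rpow_sub hx, Real.rpow_one, Real.inv_rpow hx.le, div_eq_mul_inv]

lemma beta_eq_sum_bernsteinPolynomial (n : ℕ) (hn : n ≠ 0) {γ : ℝ} (hγ : γ ≠ 0) (p : ℝ) :
    beta n γ p = ∑ ν ∈ range (n + 1), (bernsteinPolynomial ℝ n ν).eval p * ((ν : ℝ) / n) ^ γ := by
  obtain ⟨m, rfl⟩ := Nat.exists_eq_add_one_of_ne_zero hn
  rw [sum_range_succ', Nat.cast_zero, zero_div, Real.zero_rpow hγ, mul_zero, add_zero,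
    beta, theta, mul_sum]
  refine sum_congr rfl fun k _ => ?_
  have hx : (0 : ℝ) < (m + 1) / (k + 1) := by positivity
  simp only [bernsteinPolynomial, eval_mul, eval_pow, eval_sub, eval_one, eval_X, eval_natCast,
    Nat.cast_add, Nat.cast_one, Nat.add_sub_cancel, Nat.add_sub_add_right,
    Nat.choose_succ_succ_eq_div_mul, rpow_one_sub_eq_mul_inv_rpow hx, inv_div]
  ring

theorem beta_gt_rpow (n : ℕ) (hn : 2 ≤ n) (p γ : ℝ) (hp0 : 0 < p) (hp1 : p < 1)
    (hγ : 1 < γ) : beta n γ p > p ^ γ := by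
  have hn0 : n ≠ 0 := by omega
  rw [beta_eq_sum_bernsteinPolynomial n hn0 (by positivity) p]
  have hjensen := (strictConvexOn_rpow hγ).map_sum_lt
    (fun ν hν => bernsteinPolynomial_eval_pos (Nat.lt_succ_iff.mp (mem_range.mp hν)) hp0 hp1)
    (sum_bernsteinPolynomial_eval n p)
    (fun ν _ => Set.mem_Ici.mpr (by positivity : (0 : ℝ) ≤ ν / n))
    ⟨0, by simp, n, by simp, ?_⟩
  · simpa only [smul_eq_mul, sum_bernsteinPolynomial_eval_mul_div n p hn0] using hjensen
  · simp [hn0]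
end

section
/- Define the ratio R_{n,γ}(p) = β_{n,γ}(p)^{1/γ}/p where β_{n,γ}(p) = p·∑_{k=0}^{n-1} C(n-1,k)p^k(1-p)^{n-1-k}(n/(k+1))^{1-γ}. For any n ≥ 2 and 0 < p < 1: R_{n,γ}(p) < 1 if 0 < γ < 1, R_{n,γ}(p) = 1 if γ = 1, and R_{n,γ}(p) > 1 if γ > 1. -/
open Finset

/-- R_{n,γ}(p) = β_{n,γ}(p)^{1/γ} / p : ratio of optimal to natural tontine payout. -/
noncomputable def ratioR (n : ℕ) (γ p : ℝ) : ℝ := (beta n γ p) ^ (1 / γ) / p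

/-!
With `K ~ Bin(n-1, p)` and `X = n / (K + 1)`, we have `θ = E[X^(1-γ)]`, and `R < 1` is equivalent
to `θ < (1/p)^(1-γ)` (reversed for `R > 1`). The binomial identity `p E[X] = 1 - (1-p)^n` gives
`E[X] < 1/p`. For `0 < γ < 1` the power `t ↦ t^(1-γ)` is concave and increasing, so by Jensen
`θ ≤ E[X]^(1-γ) < (1/p)^(1-γ)`; for `γ > 1` it is convex and decreasing, and both inequalities
reverse. For `γ = 1`, `θ` is the total mass of the binomial distribution.
-/

open Set in
theorem strictConvexOn_rpow_of_neg {c : ℝ} (hc : c < 0) :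
    StrictConvexOn ℝ (Ioi 0) fun x : ℝ => x ^ c := by
  refine strictConvexOn_of_deriv2_pos (convex_Ioi 0)
    (fun x hx => (Real.continuousAt_rpow_const x c (Or.inl hx.ne')).continuousWithinAt)
    fun x hx => ?_
  rw [interior_Ioi] at hx
  rw [Real.iter_deriv_rpow_const]
  have hcoeff : 0 < (descPochhammer ℝ 2).eval c := by
    simp only [descPochhammer_succ_eval, descPochhammer_one, Polynomial.eval_X, Nat.cast_one]
    nlinarith
  have hpow := Real.rpow_pos_of_pos (mem_Ioi.mp hx) (c - (2 : ℕ))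
  positivity

section Jensen

variable {ι : Type*} {s : Finset ι} {w x : ι → ℝ} {c r : ℝ}

theorem sum_mul_rpow_lt_rpow_of_sum_mul_lt (hw : ∀ i ∈ s, 0 ≤ w i) (hw1 : ∑ i ∈ s, w i = 1)
    (hx : ∀ i ∈ s, 0 ≤ x i) (hr0 : 0 < r) (hr1 : r ≤ 1) (hc : ∑ i ∈ s, w i * x i < c) :
    ∑ i ∈ s, w i * x i ^ r < c ^ r :=
  calc ∑ i ∈ s, w i * x i ^ r ≤ (∑ i ∈ s, w i * x i) ^ r :=
        (Real.concaveOn_rpow hr0.le hr1).le_map_sum hw hw1 hx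
    _ < c ^ r := Real.rpow_lt_rpow (sum_nonneg fun i hi => mul_nonneg (hw i hi) (hx i hi)) hc hr0

theorem rpow_lt_sum_mul_rpow_of_sum_mul_lt (hw : ∀ i ∈ s, 0 ≤ w i) (hw1 : ∑ i ∈ s, w i = 1)
    (hx : ∀ i ∈ s, 0 < x i) (hr : r < 0) (hc : ∑ i ∈ s, w i * x i < c) :
    c ^ r < ∑ i ∈ s, w i * x i ^ r :=
  calc c ^ r < (∑ i ∈ s, w i * x i) ^ r :=
        Real.rpow_lt_rpow_of_neg ((convex_Ioi (0 : ℝ)).sum_mem hw hw1 hx) hc hr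
    _ ≤ ∑ i ∈ s, w i * x i ^ r := (strictConvexOn_rpow_of_neg hr).convexOn.map_sum_le hw hw1 hx

end Jensen

noncomputable def binomWeight (m : ℕ) (p : ℝ) (k : ℕ) : ℝ :=
  m.choose k * p ^ k * (1 - p) ^ (m - k)

section Binomial

variable {m : ℕ} {p : ℝ}

theorem binomWeight_nonneg (hp0 : 0 ≤ p) (hp1 : p ≤ 1) (k : ℕ) : 0 ≤ binomWeight m p k := by
  have : 0 ≤ 1 - p := by linarith
  unfold binomWeight
  positivity

theorem sum_binomWeight (m : ℕ) (p : ℝ) : ∑ k ∈ range (m + 1), binomWeight m p k = 1 := by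
  have hbinom := add_pow p (1 - p) m
  rw [add_sub_cancel, one_pow] at hbinom
  rw [hbinom]
  exact sum_congr rfl fun k _ => by rw [binomWeight]; ring

theorem mul_sum_binomWeight_mul_div_succ (m : ℕ) (p : ℝ) :
    p * ∑ k ∈ range (m + 1), binomWeight m p k * (((m : ℝ) + 1) / (k + 1)) =
      1 - (1 - p) ^ (m + 1) := by
  have hterm (k : ℕ) : p * (binomWeight m p k * (((m : ℝ) + 1) / (k + 1))) =
      p ^ (k + 1) * (1 - p) ^ (m - k) * (m + 1).choose (k + 1) := by
    have hchoose : ((m : ℝ) + 1) * m.choose k = (m + 1).choose (k + 1) * (k + 1) := by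
      exact_mod_cast Nat.add_one_mul_choose_eq m k
    rw [binomWeight]
    field_simp
    linear_combination p ^ (k + 1) * (1 - p) ^ (m - k) * hchoose
  have hbinom := add_pow p (1 - p) (m + 1)
  rw [add_sub_cancel, one_pow, sum_range_succ'] at hbinom
  simp only [Nat.add_sub_add_right, pow_zero, Nat.sub_zero, Nat.choose_zero_right,
    Nat.cast_one, one_mul, mul_one] at hbinom
  rw [mul_sum, sum_congr rfl fun k _ => hterm k]
  linarith

theorem sum_binomWeight_mul_div_succ_lt_inv (hp0 : 0 < p) (hp1 : p < 1) :
    ∑ k ∈ range (m + 1), binomWeight m p k * (((m : ℝ) + 1) / (k + 1)) < p⁻¹ := by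
  have : 0 < (1 - p) ^ (m + 1) := pow_pos (by linarith) _
  rw [← mul_lt_mul_iff_of_pos_left hp0, mul_inv_cancel₀ hp0.ne', mul_sum_binomWeight_mul_div_succ]
  linarith

end Binomial

section Theta

variable {n m : ℕ} {γ p : ℝ}

theorem theta_nonneg (hp0 : 0 ≤ p) (hp1 : p ≤ 1) : 0 ≤ theta n γ p := by
  have : 0 ≤ 1 - p := by linarith
  unfold theta
  positivity

theorem theta_succ (m : ℕ) (γ p : ℝ) : theta (m + 1) γ p =
    ∑ k ∈ range (m + 1), binomWeight m p k * (((m : ℝ) + 1) / (k + 1)) ^ (1 - γ) := by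
  simp [theta, binomWeight]

theorem theta_succ_one (m : ℕ) (p : ℝ) : theta (m + 1) 1 p = 1 := by
  simp [theta_succ, sum_binomWeight]

theorem theta_succ_lt (hp0 : 0 < p) (hp1 : p < 1) (hγ0 : 0 < γ) (hγ1 : γ < 1) :
    theta (m + 1) γ p < p⁻¹ ^ (1 - γ) := by
  rw [theta_succ]
  exact sum_mul_rpow_lt_rpow_of_sum_mul_lt
    (fun k _ => binomWeight_nonneg hp0.le hp1.le k) (sum_binomWeight m p)
    (fun k _ => by positivity) (by linarith) (by linarith)
    (sum_binomWeight_mul_div_succ_lt_inv hp0 hp1)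

theorem lt_theta_succ (hp0 : 0 < p) (hp1 : p < 1) (hγ : 1 < γ) :
    p⁻¹ ^ (1 - γ) < theta (m + 1) γ p := by
  rw [theta_succ]
  exact rpow_lt_sum_mul_rpow_of_sum_mul_lt
    (fun k _ => binomWeight_nonneg hp0.le hp1.le k) (sum_binomWeight m p)
    (fun k _ => by positivity) (by linarith)
    (sum_binomWeight_mul_div_succ_lt_inv hp0 hp1)

end Theta

section Ratio

variable {n : ℕ} {γ p : ℝ}

theorem mul_inv_rpow_one_sub (hp : 0 < p) (γ : ℝ) : p * p⁻¹ ^ (1 - γ) = p ^ γ := by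
  rw [Real.inv_rpow hp.le, ← Real.rpow_neg hp.le, neg_sub, Real.rpow_sub_one hp.ne',
    mul_div_cancel₀ _ hp.ne']

theorem ratioR_lt_one_iff (hp : 0 < p) (hγ : 0 < γ) (hθ : 0 ≤ theta n γ p) :
    ratioR n γ p < 1 ↔ theta n γ p < p⁻¹ ^ (1 - γ) := by
  rw [ratioR, beta, div_lt_one hp, one_div, Real.rpow_inv_lt_iff_of_pos (by positivity) hp.le hγ,
    ← mul_inv_rpow_one_sub hp, mul_lt_mul_iff_of_pos_left hp]

theorem one_lt_ratioR_iff (hp : 0 < p) (hγ : 0 < γ) (hθ : 0 ≤ theta n γ p) :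
    1 < ratioR n γ p ↔ p⁻¹ ^ (1 - γ) < theta n γ p := by
  rw [ratioR, beta, one_lt_div hp, one_div, Real.lt_rpow_inv_iff_of_pos hp.le (by positivity) hγ,
    ← mul_inv_rpow_one_sub hp, mul_lt_mul_iff_of_pos_left hp]

theorem ratioR_one_of_theta_eq_one (hp : 0 < p) (hθ : theta n 1 p = 1) : ratioR n 1 p = 1 := by
  rw [ratioR, beta, hθ, mul_one, div_one, Real.rpow_one, div_self hp.ne']

end Ratio

theorem ratioR_trichotomy (n : ℕ) (hn : 2 ≤ n) (p γ : ℝ) (hp0 : 0 < p) (hp1 : p < 1) :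
    (0 < γ → γ < 1 → ratioR n γ p < 1) ∧
    (γ = 1 → ratioR n γ p = 1) ∧
    (1 < γ → ratioR n γ p > 1) := by
  obtain ⟨m, rfl⟩ : ∃ m, n = m + 1 := ⟨n - 1, by omega⟩
  have hθ : 0 ≤ theta (m + 1) γ p := theta_nonneg hp0.le hp1.le
  refine ⟨fun hγ0 hγ1 => ?_, fun hγ => ?_, fun hγ => ?_⟩
  · exact (ratioR_lt_one_iff hp0 hγ0 hθ).mpr (theta_succ_lt hp0 hp1 hγ0 hγ1)
  · subst hγ
    exact ratioR_one_of_theta_eq_one hp0 (theta_succ_one m p)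
  · exact (one_lt_ratioR_iff hp0 (by linarith) hθ).mpr (lt_theta_succ hp0 hp1 hγ)
end

section
/- Among payout functions c: [0,∞) → (0,∞) satisfying the budget constraint ∫₀^∞ e^{-rt} s(t) c(t) dt = 1, the constant function c(t) ≡ c₀ = (∫₀^∞ e^{-rt} s(t) dt)^{-1} uniquely maximizes the lifetime utility ∫₀^∞ e^{-rt} s(t) u(c(t)) dt, where u is strictly concave and increasing. -/
/-!
Yaari's argument: with weights `w t = e^{-rt} s(t)` and `c₀ = (∫ w)⁻¹`, the budget constraint says
that `c` has `w`-weighted mean `c₀`. Bounding `u ∘ c` by the tangent line of `u` at `c₀`, the linear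
part integrates to `u c₀ ∫ w`, and the gap between the tangent line and `u ∘ c` is nonnegative,
vanishing only where `c = c₀` by strict concavity.
-/

open MeasureTheory Set

namespace ConcaveOn

variable {S : Set ℝ} {u : ℝ → ℝ} {x y : ℝ}

theorem le_add_deriv_mul_sub (hu : ConcaveOn ℝ S u) (hx : x ∈ S) (hy : y ∈ S)
    (hd : DifferentiableAt ℝ u x) : u y ≤ u x + deriv u x * (y - x) := by
  rcases lt_trichotomy y x with hyx | rfl | hxy
  · have h := hu.deriv_le_slope hy hx hyx hd
    rw [slope_def_field, le_div_iff₀ (sub_pos.mpr hyx)] at h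
    linarith
  · simp
  · have h := hu.slope_le_deriv hx hy hxy hd
    rw [slope_def_field, div_le_iff₀ (sub_pos.mpr hxy)] at h
    linarith

end ConcaveOn

namespace StrictConcaveOn

variable {S : Set ℝ} {u : ℝ → ℝ} {x y : ℝ}

theorem lt_add_deriv_mul_sub (hu : StrictConcaveOn ℝ S u) (hx : x ∈ S) (hy : y ∈ S)
    (hyx : y ≠ x) (hd : DifferentiableAt ℝ u x) : u y < u x + deriv u x * (y - x) := by
  rcases hyx.lt_or_gt with hyx | hxy
  · have h := hu.deriv_lt_slope hy hx hyx hd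
    rw [slope_def_field, lt_div_iff₀ (sub_pos.mpr hyx)] at h
    linarith
  · have h := hu.slope_lt_deriv hx hy hxy hd
    rw [slope_def_field, div_lt_iff₀ (sub_pos.mpr hxy)] at h
    linarith

end StrictConcaveOn

section WeightedTangent

variable {α : Type*} [MeasurableSpace α] {μ : Measure α} {w c : α → ℝ} {u : ℝ → ℝ} {x₀ k : ℝ}

theorem integrable_mul_tangent_sub (hwi : Integrable w μ) (hwci : Integrable (fun a ↦ w a * c a) μ)
    (hwui : Integrable (fun a ↦ w a * u (c a)) μ) :
    Integrable (fun a ↦ w a * (u x₀ + k * (c a - x₀) - u (c a))) μ :=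
  (((hwi.mul_const (u x₀ - k * x₀)).add (hwci.const_mul k)).sub hwui).congr
    (ae_of_all _ fun a ↦ by simp only [Pi.add_apply, Pi.sub_apply]; ring)

theorem integral_mul_tangent_sub (hwi : Integrable w μ)
    (hwci : Integrable (fun a ↦ w a * c a) μ) (hwui : Integrable (fun a ↦ w a * u (c a)) μ)
    (hmean : ∫ a, w a * c a ∂μ = x₀ * ∫ a, w a ∂μ) :
    ∫ a, w a * (u x₀ + k * (c a - x₀) - u (c a)) ∂μ =
      (∫ a, w a * u x₀ ∂μ) - ∫ a, w a * u (c a) ∂μ := by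
  have hsplit : (fun a ↦ w a * (u x₀ + k * (c a - x₀) - u (c a))) =
      fun a ↦ (w a * (u x₀ - k * x₀) + k * (w a * c a)) - w a * u (c a) := by
    ext a; ring
  have hlin : Integrable (fun a ↦ w a * (u x₀ - k * x₀) + k * (w a * c a)) μ :=
    (hwi.mul_const _).add (hwci.const_mul k)
  rw [hsplit, integral_sub hlin hwui, integral_add (hwi.mul_const _) (hwci.const_mul k), integral_const_mul, integral_mul_const,
    integral_mul_const, hmean]
  ring

theorem ConcaveOn.integral_mul_comp_le {S : Set ℝ} (hu : ConcaveOn ℝ S u) (hx₀ : x₀ ∈ S)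
    (hd : DifferentiableAt ℝ u x₀) (hw : ∀ᵐ a ∂μ, 0 ≤ w a) (hc : ∀ᵐ a ∂μ, c a ∈ S)
    (hwi : Integrable w μ) (hwci : Integrable (fun a ↦ w a * c a) μ)
    (hwui : Integrable (fun a ↦ w a * u (c a)) μ)
    (hmean : ∫ a, w a * c a ∂μ = x₀ * ∫ a, w a ∂μ) :
    ∫ a, w a * u (c a) ∂μ ≤ ∫ a, w a * u x₀ ∂μ := by
  have hgap : 0 ≤ ∫ a, w a * (u x₀ + deriv u x₀ * (c a - x₀) - u (c a)) ∂μ := by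
    refine integral_nonneg_of_ae ?_
    filter_upwards [hw, hc] with a hwa hca
    exact mul_nonneg hwa (sub_nonneg.mpr (hu.le_add_deriv_mul_sub hx₀ hca hd))
  rw [integral_mul_tangent_sub hwi hwci hwui hmean] at hgap
  linarith

theorem StrictConcaveOn.ae_eq_of_integral_mul_comp_eq {S : Set ℝ} (hu : StrictConcaveOn ℝ S u)
    (hx₀ : x₀ ∈ S) (hd : DifferentiableAt ℝ u x₀) (hw : ∀ᵐ a ∂μ, 0 < w a)
    (hc : ∀ᵐ a ∂μ, c a ∈ S) (hwi : Integrable w μ) (hwci : Integrable (fun a ↦ w a * c a) μ)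
    (hwui : Integrable (fun a ↦ w a * u (c a)) μ)
    (hmean : ∫ a, w a * c a ∂μ = x₀ * ∫ a, w a ∂μ)
    (heq : ∫ a, w a * u (c a) ∂μ = ∫ a, w a * u x₀ ∂μ) :
    c =ᵐ[μ] fun _ ↦ x₀ := by
  have hgap_nonneg : 0 ≤ᵐ[μ] fun a ↦ w a * (u x₀ + deriv u x₀ * (c a - x₀) - u (c a)) := by
    filter_upwards [hw, hc] with a hwa hca
    exact mul_nonneg hwa.le (sub_nonneg.mpr (hu.concaveOn.le_add_deriv_mul_sub hx₀ hca hd))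
  have hgap_zero : (fun a ↦ w a * (u x₀ + deriv u x₀ * (c a - x₀) - u (c a))) =ᵐ[μ] 0 := by
    refine (integral_eq_zero_iff_of_nonneg_ae hgap_nonneg
      (integrable_mul_tangent_sub hwi hwci hwui)).mp ?_
    rw [integral_mul_tangent_sub hwi hwci hwui hmean, heq, sub_self]
  filter_upwards [hgap_zero, hw, hc] with a hgap hwa hca
  by_contra hne
  exact (mul_pos hwa (sub_pos.mpr (hu.lt_add_deriv_mul_sub hx₀ hca hne hd))).ne' hgap

end WeightedTangent

theorem yaari_constant_annuity_optimal_general (r : ℝ) (s : ℝ → ℝ)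
    (hpos : ∀ t : ℝ, 0 < s t)
    (hint : IntegrableOn (fun t => Real.exp (-r * t) * s t) (Ioi 0))
    (hIpos : 0 < ∫ t in Ioi (0 : ℝ), Real.exp (-r * t) * s t)
    (u : ℝ → ℝ) (hconc : StrictConcaveOn ℝ (Ioi 0) u)
    (hdiff : ∀ x ∈ Ioi (0 : ℝ), DifferentiableAt ℝ u x)
    (c : ℝ → ℝ) (hcpos : ∀ t : ℝ, 0 < c t)
    (hbudget : ∫ t in Ioi (0 : ℝ), Real.exp (-r * t) * s t * c t = 1)
    (hcint : IntegrableOn (fun t => Real.exp (-r * t) * s t * u (c t)) (Ioi 0)) :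
    (∫ t in Ioi (0 : ℝ), Real.exp (-r * t) * s t * u (c t)) ≤
      (∫ t in Ioi (0 : ℝ), Real.exp (-r * t) * s t *
        u ((∫ τ in Ioi (0 : ℝ), Real.exp (-r * τ) * s τ)⁻¹)) ∧
    ((∫ t in Ioi (0 : ℝ), Real.exp (-r * t) * s t * u (c t)) =
      (∫ t in Ioi (0 : ℝ), Real.exp (-r * t) * s t *
        u ((∫ τ in Ioi (0 : ℝ), Real.exp (-r * τ) * s τ)⁻¹)) →
      c =ᵐ[volume.restrict (Ioi (0 : ℝ))]
        fun _ => (∫ τ in Ioi (0 : ℝ), Real.exp (-r * τ) * s τ)⁻¹) := by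
  set I := ∫ τ in Ioi (0 : ℝ), Real.exp (-r * τ) * s τ
  have hx₀ : I⁻¹ ∈ Ioi (0 : ℝ) := inv_pos.mpr hIpos
  have hw : ∀ t, 0 < Real.exp (-r * t) * s t := fun t ↦ mul_pos (Real.exp_pos _) (hpos t)
  have hc : ∀ᵐ t ∂volume.restrict (Ioi (0 : ℝ)), c t ∈ Ioi (0 : ℝ) := ae_of_all _ hcpos
  have hwci : IntegrableOn (fun t ↦ Real.exp (-r * t) * s t * c t) (Ioi 0) :=
    .of_integral_ne_zero (by rw [hbudget]; exact one_ne_zero)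
  have hmean : ∫ t in Ioi (0 : ℝ), Real.exp (-r * t) * s t * c t = I⁻¹ * I := by
    rw [hbudget, inv_mul_cancel₀ hIpos.ne']
  exact ⟨hconc.concaveOn.integral_mul_comp_le hx₀ (hdiff _ hx₀) (ae_of_all _ fun t ↦ (hw t).le)
      hc hint hwci hcint hmean,
    hconc.ae_eq_of_integral_mul_comp_eq hx₀ (hdiff _ hx₀) (ae_of_all _ hw) hc hint hwci hcint
      hmean⟩

theorem yaari_constant_annuity_optimal (r : ℝ) (hr : 0 < r) (s : ℝ → ℝ)
    (hmeas : Measurable s) (hpos : ∀ t : ℝ, 0 < s t) (hle : ∀ t : ℝ, s t ≤ 1)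
    (hint : IntegrableOn (fun t => Real.exp (-r * t) * s t) (Ioi 0))
    (hIpos : 0 < ∫ t in Ioi (0 : ℝ), Real.exp (-r * t) * s t)
    (u : ℝ → ℝ) (hconc : StrictConcaveOn ℝ (Ioi 0) u)
    (hdiff : ∀ x ∈ Ioi (0 : ℝ), DifferentiableAt ℝ u x)
    (hmono : StrictMonoOn u (Ioi 0))
    (c : ℝ → ℝ) (hcmeas : Measurable c) (hcpos : ∀ t : ℝ, 0 < c t)
    (hbudget : ∫ t in Ioi (0 : ℝ), Real.exp (-r * t) * s t * c t = 1)
    (hcint : IntegrableOn (fun t => Real.exp (-r * t) * s t * u (c t)) (Ioi 0)) :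
    (∫ t in Ioi (0 : ℝ), Real.exp (-r * t) * s t * u (c t)) ≤
      (∫ t in Ioi (0 : ℝ), Real.exp (-r * t) * s t *
        u ((∫ τ in Ioi (0 : ℝ), Real.exp (-r * τ) * s τ)⁻¹)) ∧
    ((∫ t in Ioi (0 : ℝ), Real.exp (-r * t) * s t * u (c t)) =
      (∫ t in Ioi (0 : ℝ), Real.exp (-r * t) * s t *
        u ((∫ τ in Ioi (0 : ℝ), Real.exp (-r * τ) * s τ)⁻¹)) →
      c =ᵐ[volume.restrict (Ioi (0 : ℝ))]
        fun _ => (∫ τ in Ioi (0 : ℝ), Real.exp (-r * τ) * s τ)⁻¹) :=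
  yaari_constant_annuity_optimal_general r s hpos hint hIpos u hconc hdiff c hcpos hbudget hcint
end

section
/- For CRRA utility with γ > 1, γ ≠ 1, the utility of the optimal tontine U^{OT}_{n,γ} = (1/(1-γ))·(∫₀^∞ e^{-rt} β_{n,γ}(s(t))^{1/γ} dt)^γ is strictly less than the annuity utility U^A_γ = (1/(1-γ))·(∫₀^∞ e^{-rt} s(t) dt)^γ. -/
/-!
With `K ~ Bin(n - 1, p)` we have `θ_{n,γ}(p) = E[(n / (K + 1)) ^ (1 - γ)]`, and the identity
`(k + 1) C(n, k + 1) = n C(n - 1, k)` gives `E[n / (K + 1)] = (1 - (1 - p) ^ n) / p < 1 / p`.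
As `x ↦ x ^ (1 - γ)` is convex and decreasing for `γ > 1`, Jensen's inequality yields
`θ_{n,γ}(p) > p ^ (γ - 1)`, i.e. `β_{n,γ}(p) ^ (1 / γ) > p`. Applied to `p = s t` this makes the
tontine's discounted integral strictly larger than the annuity's, and the negative factor
`1 / (1 - γ)` reverses the inequality between the utilities.
-/

open Finset MeasureTheory Set

theorem convexOn_rpow_of_nonpos {c : ℝ} (hc : c ≤ 0) :
    ConvexOn ℝ (Ioi 0) fun x : ℝ ↦ x ^ c := by
  -- `x ^ c = exp (c * log x)`: a monotone convex function of a convex one.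
  have hlog : ConvexOn ℝ (Ioi 0) fun x : ℝ ↦ c * Real.log x := by
    simpa [smul_eq_mul] using (strictConcaveOn_log_Ioi.concaveOn.neg).smul (neg_nonneg.2 hc)
  have himage : Convex ℝ ((fun x : ℝ ↦ c * Real.log x) '' Ioi 0) :=
    (isPreconnected_Ioi.image _
      (continuousOn_const.mul (Real.continuousOn_log.mono fun _ hx ↦ ne_of_gt hx))).convex
  refine ((convexOn_exp.subset (subset_univ _) himage).comp hlog
    (Real.exp_monotone.monotoneOn _)).congr fun x hx ↦ ?_
  simp [Real.rpow_def_of_pos hx, mul_comm]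

theorem sum_choose_mul_pow_mul_one_sub_pow (m : ℕ) (p : ℝ) :
    ∑ k ∈ range (m + 1), (m.choose k : ℝ) * p ^ k * (1 - p) ^ (m - k) = 1 := by
  have := (add_pow p (1 - p) m).symm
  rw [add_sub_cancel, one_pow] at this
  exact (sum_congr rfl fun k _ ↦ by ring).trans this

theorem mul_sum_choose_mul_pow_mul_one_sub_pow_mul_div (m : ℕ) (p : ℝ) :
    p * ∑ k ∈ range (m + 1),
        (m.choose k : ℝ) * p ^ k * (1 - p) ^ (m - k) * (((m : ℝ) + 1) / (k + 1))
      = 1 - (1 - p) ^ (m + 1) := by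
  have hterm : ∀ k ∈ range (m + 1),
      p * ((m.choose k : ℝ) * p ^ k * (1 - p) ^ (m - k) * (((m : ℝ) + 1) / (k + 1)))
        = ((m + 1).choose (k + 1) : ℝ) * p ^ (k + 1) * (1 - p) ^ (m + 1 - (k + 1)) := by
    intro k _
    have hchoose : ((m : ℝ) + 1) * m.choose k = (m + 1).choose (k + 1) * ((k : ℝ) + 1) := by
      exact_mod_cast Nat.add_one_mul_choose_eq m k
    rw [Nat.add_sub_add_right, pow_succ]
    field_simp
    linear_combination p * p ^ k * (1 - p) ^ (m - k) * hchoose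
  have htotal := sum_choose_mul_pow_mul_one_sub_pow (m + 1) p
  rw [sum_range_succ'] at htotal
  simp only [Nat.choose_zero_right, Nat.cast_one, pow_zero, one_mul, Nat.sub_zero] at htotal
  rw [mul_sum, sum_congr rfl hterm]
  linarith

theorem rpow_lt_theta {n : ℕ} (hn : 0 < n) {γ p : ℝ} (hγ : 1 < γ) (hp₀ : 0 < p) (hp₁ : p < 1) :
    p ^ (γ - 1) < theta n γ p := by
  obtain ⟨m, rfl⟩ : ∃ m, n = m + 1 := ⟨n - 1, by omega⟩
  set w : ℕ → ℝ := fun k ↦ (m.choose k : ℝ) * p ^ k * (1 - p) ^ (m - k)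
  set y : ℕ → ℝ := fun k ↦ ((m : ℝ) + 1) / (k + 1)
  have hmean : ∑ k ∈ range (m + 1), w k * y k = (1 - (1 - p) ^ (m + 1)) / p := by
    rw [eq_div_iff hp₀.ne', mul_comm]
    exact mul_sum_choose_mul_pow_mul_one_sub_pow_mul_div m p
  have htail : 0 < (1 - p) ^ (m + 1) := pow_pos (sub_pos.2 hp₁) _
  have hmean_pos : 0 < ∑ k ∈ range (m + 1), w k * y k := by
    rw [hmean]
    exact div_pos (sub_pos.2 (pow_lt_one₀ (sub_pos.2 hp₁).le (by linarith) (by omega))) hp₀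
  have hmean_lt : ∑ k ∈ range (m + 1), w k * y k < 1 / p := by
    rw [hmean]
    exact div_lt_div_of_pos_right (by linarith) hp₀
  have hjensen := (convexOn_rpow_of_nonpos (c := 1 - γ) (by linarith)).map_sum_le
    (t := range (m + 1)) (w := w) (p := y) (fun k _ ↦ by positivity)
    (sum_choose_mul_pow_mul_one_sub_pow m p) (fun k _ ↦ by simp only [y, Set.mem_Ioi]; positivity)
  simp only [smul_eq_mul] at hjensen
  calc p ^ (γ - 1) = (1 / p) ^ (1 - γ) := by
        rw [one_div, Real.inv_rpow hp₀.le, ← Real.rpow_neg hp₀.le, neg_sub]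
    _ < (∑ k ∈ range (m + 1), w k * y k) ^ (1 - γ) :=
        Real.rpow_lt_rpow_of_neg hmean_pos hmean_lt (by linarith)
    _ ≤ ∑ k ∈ range (m + 1), w k * y k ^ (1 - γ) := hjensen
    _ = theta (m + 1) γ p := by simp only [theta, w, y, Nat.add_sub_cancel, Nat.cast_add_one]

theorem lt_beta_rpow_one_div {n : ℕ} (hn : 0 < n) {γ p : ℝ} (hγ : 1 < γ) (hp₀ : 0 < p)
    (hp₁ : p < 1) :
    p < beta n γ p ^ (1 / γ) := by
  have hγ₀ : 0 < γ := by linarith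
  have hpow : p ^ γ < beta n γ p := by
    calc p ^ γ = p * p ^ (γ - 1) := by
          rw [Real.rpow_sub hp₀, Real.rpow_one, mul_div_cancel₀ _ hp₀.ne']
      _ < beta n γ p := mul_lt_mul_of_pos_left (rpow_lt_theta hn hγ hp₀ hp₁) hp₀
  calc p = (p ^ γ) ^ (1 / γ) := by
        rw [← Real.rpow_mul hp₀.le, mul_one_div_cancel hγ₀.ne', Real.rpow_one]
    _ < beta n γ p ^ (1 / γ) :=
        Real.rpow_lt_rpow (Real.rpow_nonneg hp₀.le γ) hpow (one_div_pos.2 hγ₀)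

theorem setIntegral_lt_setIntegral_of_forall_lt {X : Type*} [MeasurableSpace X] {μ : Measure X}
    {s : Set X} {f g : X → ℝ} (hs : MeasurableSet s) (hμs : μ s ≠ 0)
    (hf : IntegrableOn f s μ) (hg : IntegrableOn g s μ) (hlt : ∀ x ∈ s, f x < g x) :
    ∫ x in s, f x ∂μ < ∫ x in s, g x ∂μ := by
  rw [← sub_pos, ← integral_sub hg hf, setIntegral_pos_iff_support_of_nonneg_ae
    ((ae_restrict_iff' hs).2 (ae_of_all _ fun x hx ↦ (sub_pos.2 (hlt x hx)).le)) (hg.sub hf)]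
  rwa [inter_eq_self_of_subset_right fun x hx ↦ Function.mem_support.2 (sub_pos.2 (hlt x hx)).ne',
    pos_iff_ne_zero]

theorem tontine_utility_lt_annuity_utility_gamma_gt_one_general
    (n : ℕ) (hn : 2 ≤ n) (γ r : ℝ) (hγ : 1 < γ)
    (s : ℝ → ℝ)
    (hs : ∀ t : ℝ, 0 < t → 0 < s t ∧ s t < 1)
    (hint : IntegrableOn (fun t => Real.exp (-r * t) * s t) (Ioi 0))
    (hIpos : 0 < ∫ t in Ioi (0 : ℝ), Real.exp (-r * t) * s t)
    (hintOT : IntegrableOn (fun t => Real.exp (-r * t) * (beta n γ (s t)) ^ (1 / γ)) (Ioi 0)) :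
    (1 / (1 - γ)) * (∫ t in Ioi (0 : ℝ),
        Real.exp (-r * t) * (beta n γ (s t)) ^ (1 / γ)) ^ γ
      < (1 / (1 - γ)) * (∫ t in Ioi (0 : ℝ), Real.exp (-r * t) * s t) ^ γ := by
  have hpointwise : ∀ t ∈ Ioi (0 : ℝ),
      Real.exp (-r * t) * s t < Real.exp (-r * t) * (beta n γ (s t)) ^ (1 / γ) := fun t ht ↦
    mul_lt_mul_of_pos_left (lt_beta_rpow_one_div (by omega) hγ (hs t ht).1 (hs t ht).2)
      (Real.exp_pos _)
  have hintegral := setIntegral_lt_setIntegral_of_forall_lt measurableSet_Ioi (by simp)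
    hint hintOT hpointwise
  refine mul_lt_mul_of_neg_left ?_ (one_div_neg.2 (by linarith))
  exact Real.rpow_lt_rpow hIpos.le hintegral (by linarith)

theorem tontine_utility_lt_annuity_utility_gamma_gt_one
    (n : ℕ) (hn : 2 ≤ n) (γ r : ℝ) (hγ : 1 < γ) (hr : 0 < r)
    (s : ℝ → ℝ) (hmeas : Measurable s)
    (hs : ∀ t : ℝ, 0 < t → 0 < s t ∧ s t < 1)
    (hint : IntegrableOn (fun t => Real.exp (-r * t) * s t) (Ioi 0))
    (hIpos : 0 < ∫ t in Ioi (0 : ℝ), Real.exp (-r * t) * s t)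
    (hintOT : IntegrableOn (fun t => Real.exp (-r * t) * (beta n γ (s t)) ^ (1 / γ)) (Ioi 0))
    (hJpos : 0 < ∫ t in Ioi (0 : ℝ), Real.exp (-r * t) * (beta n γ (s t)) ^ (1 / γ)) :
    (1 / (1 - γ)) * (∫ t in Ioi (0 : ℝ),
        Real.exp (-r * t) * (beta n γ (s t)) ^ (1 / γ)) ^ γ
      < (1 / (1 - γ)) * (∫ t in Ioi (0 : ℝ), Real.exp (-r * t) * s t) ^ γ :=
  tontine_utility_lt_annuity_utility_gamma_gt_one_general n hn γ r hγ s hs hint hIpos hintOT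
end
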